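/- Soundness of CCSR_AB: every formula of Φ_CCSR_AB derivable in the axiomatic system for CCSR_AB is valid, i.e., for every φ ∈ Φ_CCSR_AB, if ⊢_CCSR_AB φ then ⊨ φ. -/
import Mathlib


open scoped Classical

/-- Graph-inclusion between joint actions (represented as partial functions). -/
def subJA {Agt Act : Type} (σ σ' : Agt → Option Act) : Prop :=
  ∀ a x, σ a = some x → σ' a = some x

/-- Restriction of a joint action to a coalition. -/
noncomputable def restrictJA {Agt Act : Type} (σ : Agt → Option Act) (B : Set Agt) :
    Agt → Option Act :=
  fun a => if a ∈ B then σ a else none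

/-- σ_A ⊎ σ_B : keep σ_A on A and σ_B on B − A. -/
noncomputable def uplusJA {Agt Act : Type} (A B : Set Agt) (σA σB : Agt → Option Act) :
    Agt → Option Act :=
  fun a => if a ∈ A then σA a else if a ∈ B then σB a else none

/-- Concurrent game models over agents `Agt` and atomic propositions `AP`.
A joint action of a coalition `A` is represented as a function `Agt → Option Act`
whose domain (the set of agents where it is `some`) is exactly `A`. -/
structure CGM (Agt AP : Type) where
  St : Type
  Act : Type
  st_ne : Nonempty St
  act_ne : Nonempty Act
  aja : St → Set Agt → Set (Agt → Option Act)
  out : St → (Agt → Option Act) → Set St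
  lab : St → Set AP
  aja_ne : ∀ s A, (aja s A).Nonempty
  aja_dom : ∀ s A, ∀ σ ∈ aja s A, ∀ a, (σ a).isSome ↔ a ∈ A
  aja_glue : ∀ s A (σ : Agt → Option Act), A.Nonempty →
      (∀ a, (σ a).isSome ↔ a ∈ A) →
      (σ ∈ aja s A ↔ ∀ a ∈ A, restrictJA σ {a} ∈ aja s {a})
  out_univ : ∀ s, ∀ σ ∈ aja s Set.univ, ∃ t, out s σ = {t}
  out_univ_not : ∀ s (σ : Agt → Option Act), (∀ a, (σ a).isSome) →
      σ ∉ aja s Set.univ → out s σ = ∅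
  out_glue : ∀ s A, A ≠ Set.univ → ∀ σ ∈ aja s A,
      out s σ = {t | ∃ σ' ∈ aja s Set.univ, subJA σ σ' ∧ t ∈ out s σ'}
  out_not : ∀ s A (σ : Agt → Option Act), (∀ a, (σ a).isSome ↔ a ∈ A) →
      A ≠ Set.univ → σ ∉ aja s A → out s σ = ∅

/-- The ability fragment Φ_CCSR_AB. -/
inductive FormCAB (Agt AP : Type) : Type
  | top : FormCAB Agt AP
  | bot : FormCAB Agt AP
  | atom : AP → FormCAB Agt AP
  | natom : AP → FormCAB Agt AP
  | and : FormCAB Agt AP → FormCAB Agt AP → FormCAB Agt AP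
  | or : FormCAB Agt AP → FormCAB Agt AP → FormCAB Agt AP
  | cdia : Set Agt → Set Agt → FormCAB Agt AP → FormCAB Agt AP → FormCAB Agt AP

/-- Satisfaction for Φ_CCSR_AB. -/
def satCAB {Agt AP : Type} (M : CGM Agt AP) : M.St → FormCAB Agt AP → Prop
  | _, FormCAB.top => True
  | _, FormCAB.bot => False
  | s, FormCAB.atom p => p ∈ M.lab s
  | s, FormCAB.natom p => p ∉ M.lab s
  | s, FormCAB.and φ ψ => satCAB M s φ ∧ satCAB M s ψ
  | s, FormCAB.or φ ψ => satCAB M s φ ∨ satCAB M s ψ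
  | s, FormCAB.cdia A B φ ψ =>
      ∃ σA ∈ M.aja s A, (∀ t ∈ M.out s σA, satCAB M t φ) ∧
        ∃ σB ∈ M.aja s B, ∀ t ∈ M.out s (uplusJA A B σA σB), satCAB M t ψ

/-- Validity for Φ_CCSR_AB. -/
def validCAB {Agt AP : Type} (φ : FormCAB Agt AP) : Prop :=
  ∀ (M : CGM Agt AP) (s : M.St), satCAB M s φ

/-- Propositional evaluation, treating modal formulas as atoms (valuation `w`). -/
def evalCAB {Agt AP : Type} (v : AP → Prop) (w : FormCAB Agt AP → Prop) :
    FormCAB Agt AP → Prop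
  | FormCAB.top => True
  | FormCAB.bot => False
  | FormCAB.atom p => v p
  | FormCAB.natom p => ¬ v p
  | FormCAB.and φ ψ => evalCAB v w φ ∧ evalCAB v w ψ
  | FormCAB.or φ ψ => evalCAB v w φ ∨ evalCAB v w ψ
  | FormCAB.cdia A B φ ψ => w (FormCAB.cdia A B φ ψ)

/-- Derivability in the axiomatic system for CCSR_AB. -/
inductive DerCAB {Agt AP : Type} : FormCAB Agt AP → Prop
  | r1 (Γ : List (FormCAB Agt AP)) (ψ : FormCAB Agt AP) :
      (∀ φ ∈ Γ, DerCAB φ) →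
      (∀ (v : AP → Prop) (w : FormCAB Agt AP → Prop),
        (∀ φ ∈ Γ, evalCAB v w φ) → evalCAB v w ψ) →
      DerCAB ψ
  | r2 (A : Set Agt) (φ : FormCAB Agt AP) :
      DerCAB φ → DerCAB (FormCAB.cdia A ∅ φ FormCAB.top)
  | r3 (A : Set Agt) (φ1 φ2 χ : FormCAB Agt AP) :
      DerCAB (FormCAB.or (FormCAB.cdia A ∅ (FormCAB.or φ1 φ2) FormCAB.top) χ) →
      DerCAB (FormCAB.or (FormCAB.cdia A ∅ φ1 FormCAB.top)
        (FormCAB.or (FormCAB.cdia Set.univ ∅ φ2 FormCAB.top) χ))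
  | r4 (A B : Set Agt) (φ ψ χ : FormCAB Agt AP) :
      DerCAB (FormCAB.or (FormCAB.cdia A ∅ (FormCAB.and φ ψ) FormCAB.top) χ) →
      DerCAB (FormCAB.or (FormCAB.cdia A B φ ψ) χ)
  | r5 (A B : Set Agt) (φ ψ χ : FormCAB Agt AP) :
      DerCAB (FormCAB.or (FormCAB.and
        (FormCAB.cdia (A ∪ B) ∅ (FormCAB.and φ ψ) FormCAB.top)
        (FormCAB.cdia ∅ ∅ φ FormCAB.top)) χ) →
      DerCAB (FormCAB.or (FormCAB.cdia A B φ ψ) χ)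

/-- Literals of Φ_CCSR_AB. -/
inductive IsLitCAB {Agt AP : Type} : FormCAB Agt AP → Prop
  | atom (p : AP) : IsLitCAB (FormCAB.atom p)
  | natom (p : AP) : IsLitCAB (FormCAB.natom p)

/-- Elementary disjunctions (⊥ is the empty disjunction). -/
inductive IsElemDisjCAB {Agt AP : Type} : FormCAB Agt AP → Prop
  | bot : IsElemDisjCAB FormCAB.bot
  | lit {φ : FormCAB Agt AP} : IsLitCAB φ → IsElemDisjCAB φ
  | or {φ ψ : FormCAB Agt AP} : IsElemDisjCAB φ → IsElemDisjCAB ψ →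
      IsElemDisjCAB (FormCAB.or φ ψ)

/-- Finite disjunction of a list of formulas (empty disjunction is ⊥). -/
def bigOrCAB {Agt AP : Type} : List (FormCAB Agt AP) → FormCAB Agt AP
  | [] => FormCAB.bot
  | φ :: l => FormCAB.or φ (bigOrCAB l)

section Helpers

variable {Agt AP : Type}

lemma eval_sat (M : CGM Agt AP) (s : M.St) :
    ∀ χ : FormCAB Agt AP,
      evalCAB (fun p => p ∈ M.lab s) (fun χ => satCAB M s χ) χ ↔ satCAB M s χ
  | FormCAB.top => Iff.rfl
  | FormCAB.bot => Iff.rfl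
  | FormCAB.atom _ => Iff.rfl
  | FormCAB.natom _ => Iff.rfl
  | FormCAB.and φ ψ => by
      simp only [evalCAB, satCAB, eval_sat M s φ, eval_sat M s ψ]
  | FormCAB.or φ ψ => by
      simp only [evalCAB, satCAB, eval_sat M s φ, eval_sat M s ψ]
  | FormCAB.cdia _ _ _ _ => Iff.rfl

lemma mem_aja_empty (M : CGM Agt AP) (s : M.St) :
    (fun _ => none : Agt → Option M.Act) ∈ M.aja s ∅ := by
  obtain ⟨σ, hσ⟩ := M.aja_ne s ∅
  have hσe : σ = fun _ => none := by
    funext a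
    have h := M.aja_dom s ∅ σ hσ a
    simp only [Set.mem_empty_iff_false, iff_false] at h
    exact Option.not_isSome_iff_eq_none.mp h
  rwa [hσe] at hσ

lemma eq_none_of_mem_aja_empty (M : CGM Agt AP) (s : M.St)
    {σ : Agt → Option M.Act} (hσ : σ ∈ M.aja s ∅) :
    σ = fun _ => none := by
  funext a
  have h := M.aja_dom s ∅ σ hσ a
  simp only [Set.mem_empty_iff_false, iff_false] at h
  exact Option.not_isSome_iff_eq_none.mp h

lemma restrict_mem_aja (M : CGM Agt AP) (s : M.St) {C : Set Agt}
    {σ : Agt → Option M.Act} (hσ : σ ∈ M.aja s C) (A : Set Agt) (hAC : A ⊆ C) :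
    restrictJA σ A ∈ M.aja s A := by
  have hdom : ∀ a, ((restrictJA σ A) a).isSome ↔ a ∈ A := by
    intro a
    by_cases ha : a ∈ A
    · have hac : a ∈ C := hAC ha
      simp [restrictJA, if_pos ha, M.aja_dom s C σ hσ a, ha, hac]
    · simp [restrictJA, if_neg ha, ha]
  rcases A.eq_empty_or_nonempty with hA | hA
  · subst hA
    have : restrictJA σ (∅ : Set Agt) = fun _ => none := by
      funext a; simp [restrictJA]
    rw [this]
    exact mem_aja_empty M s
  · have hCne : C.Nonempty := hA.mono hAC
    refine (M.aja_glue s A _ hA hdom).2 ?_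
    intro a ha
    have h1 := (M.aja_glue s C σ hCne (M.aja_dom s C σ hσ)).1 hσ a (hAC ha)
    have : restrictJA (restrictJA σ A) {a} = restrictJA σ {a} := by
      funext b
      by_cases hb : b ∈ ({a} : Set Agt)
      · have hb' : b = a := hb
        subst hb'
        simp [restrictJA, if_pos hb, if_pos ha]
      · have hb' : b ≠ a := hb
        simp [restrictJA, hb']
    rwa [this]

lemma out_mono (M : CGM Agt AP) (s : M.St) {A C : Set Agt}
    {σA σ : Agt → Option M.Act} (hA : σA ∈ M.aja s A)
    (hdom : ∀ a, (σ a).isSome ↔ a ∈ C) (hAC : A ⊆ C) (hsub : subJA σA σ) :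
    M.out s σ ⊆ M.out s σA := by
  by_cases hC : C = Set.univ
  · subst hC
    by_cases hmem : σ ∈ M.aja s Set.univ
    · by_cases hA' : A = Set.univ
      · subst hA'
        have : σ = σA := by
          funext a
          have h1 : (σA a).isSome := (M.aja_dom s _ σA hA a).2 trivial
          obtain ⟨x, hx⟩ := Option.isSome_iff_exists.mp h1
          rw [hx, hsub a x hx]
        rw [this]
      · intro t ht
        rw [M.out_glue s A hA' σA hA]
        exact ⟨σ, hmem, hsub, ht⟩
    · rw [M.out_univ_not s σ (fun a => (hdom a).2 trivial) hmem]
      simp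
  · by_cases hmem : σ ∈ M.aja s C
    · have hA' : A ≠ Set.univ := fun h =>
        hC (Set.eq_univ_of_univ_subset (h ▸ hAC))
      intro t ht
      rw [M.out_glue s C hC σ hmem] at ht
      obtain ⟨σ', hσ', hsub', ht'⟩ := ht
      rw [M.out_glue s A hA' σA hA]
      exact ⟨σ', hσ', fun a x hx => hsub' a x (hsub a x hx), ht'⟩
    · rw [M.out_not s C σ hdom hC hmem]
      simp

lemma uplus_dom (M : CGM Agt AP) (s : M.St) {A B : Set Agt}
    {σA σB : Agt → Option M.Act} (hA : σA ∈ M.aja s A) (hB : σB ∈ M.aja s B) :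
    ∀ a, ((uplusJA A B σA σB) a).isSome ↔ a ∈ A ∪ B := by
  intro a
  by_cases ha : a ∈ A
  · simp [uplusJA, if_pos ha, M.aja_dom s A σA hA a, ha]
  · by_cases hb : a ∈ B
    · simp [uplusJA, if_neg ha, if_pos hb, M.aja_dom s B σB hB a, hb]
    · simp [uplusJA, if_neg ha, if_neg hb, ha, hb]

lemma sub_uplus_left (M : CGM Agt AP) (s : M.St) {A B : Set Agt}
    {σA σB : Agt → Option M.Act} (hA : σA ∈ M.aja s A) :
    subJA σA (uplusJA A B σA σB) := by
  intro a x hx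
  have ha : a ∈ A := (M.aja_dom s A σA hA a).1 (by rw [hx]; rfl)
  simp [uplusJA, if_pos ha, hx]

lemma out_uplus_subset (M : CGM Agt AP) (s : M.St) {A B : Set Agt}
    {σA σB : Agt → Option M.Act} (hA : σA ∈ M.aja s A) (hB : σB ∈ M.aja s B) :
    M.out s (uplusJA A B σA σB) ⊆ M.out s σA :=
  out_mono M s hA (uplus_dom M s hA hB) Set.subset_union_left
    (sub_uplus_left M s hA)

lemma out_univ_eq (M : CGM Agt AP) (s : M.St) {σ : Agt → Option M.Act}
    (h : σ ∈ M.aja s Set.univ) {t : M.St} (ht : t ∈ M.out s σ) :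
    M.out s σ = {t} := by
  obtain ⟨t', ht'⟩ := M.out_univ s σ h
  rw [ht'] at ht ⊢
  rw [Set.mem_singleton_iff.mp ht]

lemma exists_univ_ext (M : CGM Agt AP) (s : M.St) {A : Set Agt}
    {σA : Agt → Option M.Act} (hA : σA ∈ M.aja s A) {t : M.St}
    (ht : t ∈ M.out s σA) :
    ∃ σ' ∈ M.aja s Set.univ, subJA σA σ' ∧ M.out s σ' = {t} := by
  by_cases hA' : A = Set.univ
  · subst hA'
    exact ⟨σA, hA, fun a x hx => hx, out_univ_eq M s hA ht⟩
  · rw [M.out_glue s A hA' σA hA] at ht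
    obtain ⟨σ', hσ', hsub, ht'⟩ := ht
    exact ⟨σ', hσ', hsub, out_univ_eq M s hσ' ht'⟩

end Helpers

/-- Soundness of CCSR_AB: every derivable formula of Φ_CCSR_AB is valid. -/
theorem soundness_CCSR_AB
    {Agt AP : Type} [Fintype Agt] [Nonempty Agt] [Countable AP]
    (φ : FormCAB Agt AP) (h : DerCAB φ) : validCAB φ := by
  induction h with
  | r1 Γ ψ hΓ hsem ih =>
    intro M s
    exact (eval_sat M s ψ).1 <| hsem (fun p => p ∈ M.lab s)
      (fun χ => satCAB M s χ) (fun φ hφ => (eval_sat M s φ).2 (ih φ hφ M s))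
  | r2 A φ hφ ih =>
    intro M s
    obtain ⟨σA, hσA⟩ := M.aja_ne s A
    exact ⟨σA, hσA, fun t _ => ih M t,
      (fun _ => none), mem_aja_empty M s, fun t _ => trivial⟩
  | r3 A φ1 φ2 χ hd ih =>
    intro M s
    rcases ih M s with h1 | hχ
    · obtain ⟨σA, hσA, hout, -⟩ := h1
      by_cases hall : ∀ t ∈ M.out s σA, satCAB M t φ1
      · exact Or.inl ⟨σA, hσA, hall,
          (fun _ => none), mem_aja_empty M s, fun t _ => trivial⟩
      · push_neg at hall
        obtain ⟨t, ht, ht1⟩ := hall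
        have ht2 : satCAB M t φ2 := (hout t ht).resolve_left ht1
        obtain ⟨σ', hσ', -, hout'⟩ := exists_univ_ext M s hσA ht
        refine Or.inr (Or.inl ⟨σ', hσ', ?_,
          (fun _ => none), mem_aja_empty M s, fun t _ => trivial⟩)
        intro t' ht'
        rw [hout'] at ht'
        rwa [Set.mem_singleton_iff.mp ht']
    · exact Or.inr (Or.inr hχ)
  | r4 A B φ ψ χ hd ih =>
    intro M s
    rcases ih M s with h1 | hχ
    · obtain ⟨σA, hσA, hout, -⟩ := h1
      obtain ⟨σB, hσB⟩ := M.aja_ne s B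
      refine Or.inl ⟨σA, hσA, fun t ht => (hout t ht).1, σB, hσB, ?_⟩
      intro t ht
      exact (hout t (out_uplus_subset M s hσA hσB ht)).2
    · exact Or.inr hχ
  | r5 A B φ ψ χ hd ih =>
    intro M s
    rcases ih M s with ⟨h1, h2⟩ | hχ
    · obtain ⟨σ, hσ, hout, -⟩ := h1
      obtain ⟨σ0, hσ0, hφ, -⟩ := h2
      -- every state reachable via some full action profile satisfies φ
      have hreach : ∀ σ' ∈ M.aja s Set.univ, ∀ t ∈ M.out s σ', satCAB M t φ := by
        intro σ' hσ' t ht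
        apply hφ t
        have h0 : σ0 = fun _ => none := eq_none_of_mem_aja_empty M s hσ0
        have hne : (∅ : Set Agt) ≠ Set.univ := by
          simpa using (Set.empty_ne_univ : (∅ : Set Agt) ≠ Set.univ)
        rw [M.out_glue s ∅ hne σ0 hσ0]
        refine ⟨σ', hσ', ?_, ht⟩
        intro a x hx
        rw [h0] at hx
        simp at hx
      set σA := restrictJA σ A with hσAdef
      set σB := restrictJA σ B with hσBdef
      have hσA : σA ∈ M.aja s A := restrict_mem_aja M s hσ A Set.subset_union_left
      have hσB : σB ∈ M.aja s B := restrict_mem_aja M s hσ B Set.subset_union_right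
      have huplus : uplusJA A B σA σB = σ := by
        funext a
        by_cases ha : a ∈ A
        · simp [uplusJA, σA, restrictJA, if_pos ha, ha]
        · by_cases hb : a ∈ B
          · simp [uplusJA, σB, restrictJA, if_neg ha, if_pos hb, ha, hb]
          · have : ¬ (σ a).isSome := by
              rw [M.aja_dom s (A ∪ B) σ hσ a]
              simp [ha, hb]
            simp [uplusJA, if_neg ha, if_neg hb, ha, hb,
              (Option.not_isSome_iff_eq_none.mp this).symm]
      refine Or.inl ⟨σA, hσA, ?_, σB, hσB, ?_⟩
      · -- outcomes of σA satisfy φ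
        intro t ht
        by_cases hA' : A = Set.univ
        · subst hA'
          exact hreach σA hσA t ht
        · rw [M.out_glue s A hA' σA hσA] at ht
          obtain ⟨σ', hσ', -, ht'⟩ := ht
          exact hreach σ' hσ' t ht'
      · intro t ht
        rw [huplus] at ht
        exact (hout t ht).2
    · exact Or.inr hχ
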